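/- Let S' be an isolated suborder of a partially ordered set (S,≤), let Q be the set of equivalence classes of ≡_{S'} partially ordered by the quotient relation ≤_{S'}, and let 𝒮 ⊆ Q be an isolated suborder of (Q, ≤_{S'}). Then S'' := ⋃𝒮, the union of the equivalence classes belonging to 𝒮, is an isolated suborder of (S,≤). -/

import Mathlib

/-!
The classes of `≡_{S'}` are `S'` and singletons, so each has a least and a greatest element, and
isolation of `S'` makes the quotient order between two distinct classes elementwise: `A ≤_{S'} C`
forces `a ≤ c` for all `a ∈ A`, `c ∈ C`. Hence the least element of the least class of `𝒮` and the
greatest element of its greatest class bound `⋃₀ 𝒮`, and the isolation of `𝒮` in the quotient,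
applied to the class of a point outside `⋃₀ 𝒮`, becomes the isolation of `⋃₀ 𝒮` in `α`.
-/

/-- `S'` is an *isolated suborder* of the partially ordered set. -/
def IsIsolatedSuborder {α : Type*} [PartialOrder α] (S' : Set α) : Prop :=
  ∃ b t, IsLeast S' b ∧ IsGreatest S' t ∧
    ∀ x ∉ S', ∀ y ∈ S', (y ≤ x → t ≤ x) ∧ (x ≤ y → x ≤ b)

/-- The equivalence class of `x` under `≡_{S'}`. -/
def eqClass {α : Type*} (S' : Set α) (x : α) : Set α :=
  {y | (x ∈ S' ∧ y ∈ S') ∨ (x ∉ S' ∧ y = x)}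

/-- The set of equivalence classes of `≡_{S'}`. -/
def quotClasses {α : Type*} (S' : Set α) : Set (Set α) :=
  Set.range (eqClass S')

/-- The quotient relation on equivalence classes. -/
def qle {α : Type*} [PartialOrder α] (A B : Set α) : Prop :=
  ∃ a ∈ A, ∃ b ∈ B, a ≤ b

/-- `b` is the least element of `A` with respect to the relation `r`. -/
def IsLeastRel {β : Type*} (r : β → β → Prop) (A : Set β) (b : β) : Prop :=
  b ∈ A ∧ ∀ y ∈ A, r b y

/-- `t` is the greatest element of `A` with respect to the relation `r`. -/
def IsGreatestRel {β : Type*} (r : β → β → Prop) (A : Set β) (t : β) : Prop :=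
  t ∈ A ∧ ∀ y ∈ A, r y t

/-- `S'` is an isolated suborder of the ordered set with carrier `carrier` and
order relation `r`. -/
def IsIsolatedSuborderRel {β : Type*} (r : β → β → Prop) (carrier S' : Set β) : Prop :=
  S' ⊆ carrier ∧ ∃ b t, IsLeastRel r S' b ∧ IsGreatestRel r S' t ∧
    ∀ x ∈ carrier, x ∉ S' → ∀ y ∈ S', (r y x → r t x) ∧ (r x y → r x b)

section Classes

variable {α : Type*} {S' : Set α}

lemma eqClass_of_mem {x : α} (hx : x ∈ S') : eqClass S' x = S' := by
  ext y; simp [eqClass, hx]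

lemma eqClass_of_notMem {x : α} (hx : x ∉ S') : eqClass S' x = {x} := by
  ext y; simp [eqClass, hx]

lemma mem_eqClass_self (x : α) : x ∈ eqClass S' x := by
  by_cases hx : x ∈ S' <;> simp [eqClass, hx]

lemma eq_or_eq_singleton_of_mem_quotClasses {A : Set α} (hA : A ∈ quotClasses S') :
    A = S' ∨ ∃ x ∉ S', A = {x} := by
  obtain ⟨x, rfl⟩ := hA
  by_cases hx : x ∈ S'
  · exact .inl (eqClass_of_mem hx)
  · exact .inr ⟨x, hx, eqClass_of_notMem hx⟩

end Classes

section Isolated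

variable {α : Type*} [PartialOrder α] {S' : Set α} {A C : Set α}

lemma IsIsolatedSuborder.exists_isLeast_of_mem_quotClasses (hS' : IsIsolatedSuborder S')
    (hA : A ∈ quotClasses S') : ∃ a, IsLeast A a := by
  obtain ⟨b, -, hb, -⟩ := hS'
  rcases eq_or_eq_singleton_of_mem_quotClasses hA with rfl | ⟨x, -, rfl⟩
  exacts [⟨b, hb⟩, ⟨x, isLeast_singleton⟩]

lemma IsIsolatedSuborder.exists_isGreatest_of_mem_quotClasses (hS' : IsIsolatedSuborder S')
    (hA : A ∈ quotClasses S') : ∃ a, IsGreatest A a := by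
  obtain ⟨-, t, -, ht, -⟩ := hS'
  rcases eq_or_eq_singleton_of_mem_quotClasses hA with rfl | ⟨x, -, rfl⟩
  exacts [⟨t, ht⟩, ⟨x, isGreatest_singleton⟩]

lemma IsIsolatedSuborder.le_of_qle_of_ne (hS' : IsIsolatedSuborder S')
    (hA : A ∈ quotClasses S') (hC : C ∈ quotClasses S') (hAC : A ≠ C) (h : qle A C) :
    ∀ a ∈ A, ∀ c ∈ C, a ≤ c := by
  obtain ⟨b, t, hb, ht, hiso⟩ := hS'
  obtain ⟨a', ha', c', hc', hle⟩ := h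
  rcases eq_or_eq_singleton_of_mem_quotClasses hA with rfl | ⟨x, hx, rfl⟩ <;>
    rcases eq_or_eq_singleton_of_mem_quotClasses hC with rfl | ⟨z, hz, rfl⟩
  · exact absurd rfl hAC
  · rintro a ha c rfl
    rw [Set.mem_singleton_iff.mp hc'] at hle
    exact (ht.2 ha).trans ((hiso c hz a' ha').1 hle)
  · rintro a rfl c hc
    rw [Set.mem_singleton_iff.mp ha'] at hle
    exact ((hiso a hx c' hc').2 hle).trans (hb.2 hc)
  · rintro a rfl c rfl
    rwa [Set.mem_singleton_iff.mp ha', Set.mem_singleton_iff.mp hc'] at hle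

end Isolated

/-- If `𝒮` is an isolated suborder of the quotient of `(S,≤)` by an isolated
suborder `S'`, then the union of the classes in `𝒮` is an isolated suborder of
`(S,≤)`. -/
theorem sUnion_isolatedSuborder {α : Type*} [PartialOrder α] (S' : Set α)
    (hS' : IsIsolatedSuborder S') (𝒮 : Set (Set α))
    (h𝒮 : IsIsolatedSuborderRel qle (quotClasses S') 𝒮) :
    IsIsolatedSuborder (⋃₀ 𝒮) := by
  obtain ⟨hsub, B, T, hB, hT, hiso𝒮⟩ := h𝒮
  obtain ⟨β, hβ⟩ := hS'.exists_isLeast_of_mem_quotClasses (hsub hB.1)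
  obtain ⟨τ, hτ⟩ := hS'.exists_isGreatest_of_mem_quotClasses (hsub hT.1)
  refine ⟨β, τ, ⟨⟨B, hB.1, hβ.1⟩, ?_⟩, ⟨⟨T, hT.1, hτ.1⟩, ?_⟩, ?_⟩
  · rintro y ⟨C, hC, hy⟩
    rcases eq_or_ne B C with rfl | hBC
    · exact hβ.2 hy
    · exact hS'.le_of_qle_of_ne (hsub hB.1) (hsub hC) hBC (hB.2 C hC) β hβ.1 y hy
  · rintro y ⟨C, hC, hy⟩
    rcases eq_or_ne C T with rfl | hCT
    · exact hτ.2 hy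
    · exact hS'.le_of_qle_of_ne (hsub hC) (hsub hT.1) hCT (hT.2 C hC) y hy τ hτ.1
  · rintro x hx y ⟨C, hC, hy⟩
    set X := eqClass S' x
    have hxX : x ∈ X := mem_eqClass_self x
    have hX : X ∈ quotClasses S' := ⟨x, rfl⟩
    have hX𝒮 : X ∉ 𝒮 := fun h => hx ⟨X, h, hxX⟩
    have hTX : T ≠ X := fun h => hX𝒮 (h ▸ hT.1)
    have hXB : X ≠ B := fun h => hX𝒮 (h ▸ hB.1)
    refine ⟨fun hyx => ?_, fun hxy => ?_⟩
    · have hqT : qle T X := (hiso𝒮 X hX hX𝒮 C hC).1 ⟨y, hy, x, hxX, hyx⟩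
      exact hS'.le_of_qle_of_ne (hsub hT.1) hX hTX hqT τ hτ.1 x hxX
    · have hqB : qle X B := (hiso𝒮 X hX hX𝒮 C hC).2 ⟨x, hxX, y, hy, hxy⟩
      exact hS'.le_of_qle_of_ne hX (hsub hB.1) hXB hqB x hxX β hβ.1
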